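/- For n ≥ 2, the polynomial Q_n(x) = Σ_{k=1}^{n} (-1)^{n-k} (k-1)! {n,k} x^k is divisible by x(x-1), i.e., Q_n(0) = 0 and Q_n(1) = 0. -/

import Mathlib

/-!
The recurrence `S(m+1, j+1) = (j+1) S(m, j+1) + S(m, j)`, multiplied by `(-1)^j j!`, makes
`(-1)^j j! S(m+1, j+1)` the difference `f j - f (j+1)` of consecutive values of
`f j = (-1)^j j! S(m, j)`. Summing over `j ≤ m` telescopes to `f 0 - f (m+1) = S(m, 0)`,
which vanishes for `m ≥ 1`. Hence `Q_n(1) = 0`, while `Q_n(0) = 0` because `Q_n` has no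
constant term.
-/

/-- Stirling numbers of the second kind. -/
def stirlingSecond : ℕ → ℕ → ℕ
  | 0, 0 => 1
  | 0, _ + 1 => 0
  | _ + 1, 0 => 0
  | n + 1, k + 1 => (k + 1) * stirlingSecond n (k + 1) + stirlingSecond n k

theorem stirlingSecond_eq_nat_stirlingSecond : stirlingSecond = Nat.stirlingSecond := by
  funext n k
  induction n generalizing k with
  | zero => cases k <;> rfl
  | succ n ih =>
    cases k with
    | zero => rfl
    | succ k => simp only [stirlingSecond, Nat.stirlingSecond_succ_succ, ih]

section AlternatingSum

open Finset Nat

variable {R : Type*} [CommRing R]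

theorem Nat.sum_range_neg_one_pow_mul_factorial_mul_stirlingSecond_succ (m : ℕ) :
    ∑ j ∈ range (m + 1), (-1 : R) ^ j * j ! * Nat.stirlingSecond (m + 1) (j + 1) =
      Nat.stirlingSecond m 0 := by
  set f : ℕ → R := fun j ↦ (-1) ^ j * j ! * Nat.stirlingSecond m j
  have h_step (j : ℕ) :
      (-1 : R) ^ j * j ! * Nat.stirlingSecond (m + 1) (j + 1) = f j - f (j + 1) := by
    simp only [f, Nat.stirlingSecond_succ_succ, Nat.factorial_succ]
    push_cast
    ring
  simp only [h_step, sum_range_sub', f, Nat.stirlingSecond_eq_zero_of_lt m.lt_succ_self]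
  simp

theorem Nat.sum_Icc_neg_one_pow_mul_factorial_mul_stirlingSecond {n : ℕ} (hn : n ≠ 1) :
    ∑ k ∈ Icc 1 n, (-1 : R) ^ (n - k) * (k - 1)! * Nat.stirlingSecond n k = 0 := by
  rcases n with _ | _ | m
  · simp
  · exact absurd rfl hn
  have h_sign {j : ℕ} (hj : j ≤ m + 1) :
      (-1 : R) ^ (m + 1 - j) = (-1) ^ (m + 1) * (-1) ^ j := by
    obtain ⟨d, hd⟩ := Nat.exists_eq_add_of_le hj
    rw [hd, Nat.add_sub_cancel_left, pow_add, mul_right_comm, ← mul_pow]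
    simp
  calc ∑ k ∈ Icc 1 (m + 2), (-1 : R) ^ (m + 2 - k) * (k - 1)! * Nat.stirlingSecond (m + 2) k
      = ∑ j ∈ range (m + 2),
          (-1 : R) ^ (m + 1 - j) * j ! * Nat.stirlingSecond (m + 2) (j + 1) := by
        rw [← Ico_add_one_right_eq_Icc, sum_Ico_eq_sum_range]
        refine sum_congr (by simp) fun j _ ↦ ?_
        rw [add_comm 1 j, Nat.add_sub_cancel, show m + 2 - (j + 1) = m + 1 - j by omega]
    _ = (-1) ^ (m + 1) *
          ∑ j ∈ range (m + 2), (-1 : R) ^ j * j ! * Nat.stirlingSecond (m + 2) (j + 1) := by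
        rw [mul_sum]
        refine sum_congr rfl fun j hj ↦ ?_
        rw [h_sign (Nat.lt_succ_iff.mp (mem_range.mp hj))]
        ring
    _ = 0 := by
        rw [Nat.sum_range_neg_one_pow_mul_factorial_mul_stirlingSecond_succ,
          Nat.stirlingSecond_succ_zero, Nat.cast_zero, mul_zero]

end AlternatingSum

theorem stmt_13 (n : ℕ) (hn : 2 ≤ n)
    (Q : ℝ → ℝ)
    (hQ : ∀ x : ℝ, Q x = ∑ k ∈ Finset.Icc 1 n,
      (-1 : ℝ) ^ (n - k) * (Nat.factorial (k - 1)) * stirlingSecond n k * x ^ k) :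
    Q 0 = 0 ∧ Q 1 = 0 := by
  rw [hQ, hQ, stirlingSecond_eq_nat_stirlingSecond]
  constructor
  · refine Finset.sum_eq_zero fun k hk ↦ ?_
    rw [zero_pow (Nat.one_le_iff_ne_zero.mp (Finset.mem_Icc.mp hk).1), mul_zero]
  · simp only [one_pow, mul_one]
    exact Nat.sum_Icc_neg_one_pow_mul_factorial_mul_stirlingSecond (n := n) (by omega)
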